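/- Let R be a commutative ring, m ∈ R, n ≥ 1, and let a_{i,j} denote the (i,j) entry of T_n(m). Then for every 1 ≤ i ≤ n: ∑_{j=1}^n (-1)^{n+1-j}·a_{i,j}·U_{n-j} = U_{i-1}; equivalently, ∑_{j=1}^n (-1)^{n+1-j}·m^{i+j-n-1}·C(i-1, n-j)·U_{n-j} = U_{i-1}, where a term is 0 whenever C(i-1,n-j) = 0. -/
import Mathlib


/-- The generalized Fibonacci sequence with parameter `m`:
`U_0 = 0`, `U_1 = 1`, `U_{e+1} = m U_e + U_{e-1}`. -/
def genFibU {R : Type*} [CommRing R] (m : R) : ℕ → R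
  | 0 => 0
  | 1 => 1
  | e + 2 => m * genFibU m (e + 1) + genFibU m e

/-- The `n × n` generalized Fibonacci matrix `T_n(m)`, with 1-based `(i,j)` entry
`m^{i+j-n-1} C(i-1, n-j)` when `i + j ≥ n + 1` and `0` otherwise. -/
def genFibMatrix {R : Type*} [CommRing R] (m : R) (n : ℕ) :
    Matrix (Fin n) (Fin n) R :=
  Matrix.of fun i j =>
    if n ≤ i.val + j.val + 1 then
      m ^ (i.val + j.val + 1 - n) * (Nat.choose i.val (n - 1 - j.val) : R)
    else 0

open Finset

/-- Companion sequence: `H 0 = 1`, `H (i+1) = U i`. -/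
private def genH {R : Type*} [CommRing R] (m : R) : ℕ → R
  | 0 => 1
  | i + 1 => genFibU m i

private def Fsum {R : Type*} [CommRing R] (m : R) (f : ℕ → R) (i : ℕ) : R :=
  ∑ k ∈ Finset.range (i + 1), (Nat.choose i k : R) * (-1) ^ (k + 1) * m ^ (i - k) * f k

private lemma Fsum_succ {R : Type*} [CommRing R] (m : R) (f : ℕ → R) (i : ℕ) :
    Fsum m f (i + 1) = m * Fsum m f i - Fsum m (fun k => f (k + 1)) i := by
  have h1 : Fsum m f (i + 1)
      = (∑ k ∈ Finset.range (i + 1),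
          (Nat.choose (i + 1) (k + 1) : R) * (-1) ^ (k + 2) * m ^ (i - k) * f (k + 1))
        + (Nat.choose (i + 1) 0 : R) * (-1) ^ 1 * m ^ (i + 1) * f 0 := by
    rw [Fsum, Finset.sum_range_succ']
    congr 1
    apply Finset.sum_congr rfl
    intro k _
    rw [Nat.succ_sub_succ]
  have h2 : ∀ k ∈ Finset.range (i + 1),
      (Nat.choose (i + 1) (k + 1) : R) * (-1) ^ (k + 2) * m ^ (i - k) * f (k + 1)
      = -((Nat.choose i k : R) * (-1) ^ (k + 1) * m ^ (i - k) * f (k + 1))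
        + (Nat.choose i (k + 1) : R) * (-1) ^ (k + 2) * m ^ (i - k) * f (k + 1) := by
    intro k hk
    rw [Nat.choose_succ_succ]
    push_cast
    ring
  rw [h1, Finset.sum_congr rfl h2, Finset.sum_add_distrib, Finset.sum_neg_distrib]
  have h3 : m * Fsum m f i
      = (∑ k ∈ Finset.range i,
          (Nat.choose i (k + 1) : R) * (-1) ^ (k + 2) * m ^ (i - k) * f (k + 1))
        + (Nat.choose i 0 : R) * (-1) ^ 1 * m ^ (i + 1) * f 0 := by
    rw [Fsum, Finset.mul_sum, Finset.sum_range_succ']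
    congr 1
    · apply Finset.sum_congr rfl
      intro k hk
      rw [Finset.mem_range] at hk
      have : i - k = (i - (k + 1)) + 1 := by omega
      rw [this, pow_succ]
      ring
    · rw [Nat.sub_zero]
      ring
  have h4 : (∑ k ∈ Finset.range (i + 1),
        (Nat.choose i (k + 1) : R) * (-1) ^ (k + 2) * m ^ (i - k) * f (k + 1))
      = ∑ k ∈ Finset.range i,
        (Nat.choose i (k + 1) : R) * (-1) ^ (k + 2) * m ^ (i - k) * f (k + 1) := by
    rw [Finset.sum_range_succ, Nat.choose_succ_self]
    simp
  have h5 : Fsum m (fun k => f (k + 1)) i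
      = ∑ k ∈ Finset.range (i + 1),
          (Nat.choose i k : R) * (-1) ^ (k + 1) * m ^ (i - k) * f (k + 1) := rfl
  rw [h4, h3, h5]
  simp [Nat.choose_zero_right]
  ring

private lemma Fsum_linear {R : Type*} [CommRing R] (m a : R) (f g : ℕ → R) (i : ℕ) :
    Fsum m (fun k => a * f k + g k) i = a * Fsum m f i + Fsum m g i := by
  simp only [Fsum, Finset.mul_sum, ← Finset.sum_add_distrib]
  apply Finset.sum_congr rfl
  intro k _
  ring

private lemma key {R : Type*} [CommRing R] (m : R) :
    ∀ i : ℕ, Fsum m (genFibU m) i = genFibU m i ∧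
      Fsum m (fun k => genFibU m (k + 1)) i = -(genH m i) := by
  intro i
  induction i with
  | zero =>
    constructor <;> simp [Fsum, genFibU, genH]
  | succ i ih =>
    obtain ⟨hS, hT⟩ := ih
    have hlin : Fsum m (fun k => genFibU m (k + 2)) i
        = m * Fsum m (fun k => genFibU m (k + 1)) i + Fsum m (genFibU m) i := by
      have : (fun k => genFibU m (k + 2))
          = fun k => m * genFibU m (k + 1) + genFibU m k := by
        funext k; rfl
      rw [this, Fsum_linear]
    constructor
    · rw [Fsum_succ, hS, hT]
      cases i with
      | zero => simp [genFibU, genH]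
      | succ j => simp [genFibU, genH]
    · rw [Fsum_succ, hlin, hT, hS]
      have : genH m (i + 1) = genFibU m i := rfl
      rw [this]
      ring

/-- For every row `i` (1-based) of `T_n(m)`:
`∑_{j=1}^n (-1)^{n+1-j} a_{i,j} U_{n-j} = U_{i-1}`. -/
theorem genFibMatrix_row_sum {R : Type*} [CommRing R] (m : R) (n : ℕ) (hn : 1 ≤ n) :
    ∀ i : Fin n,
      ∑ j : Fin n, (-1 : R) ^ (n - j.val) * genFibMatrix m n i j * genFibU m (n - 1 - j.val) =
        genFibU m i.val := by
  intro i
  have hi : i.val < n := i.isLt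
  simp only [genFibMatrix, Matrix.of_apply]
  rw [Fin.sum_univ_eq_sum_range (fun j => (-1 : R) ^ (n - j) *
    (if n ≤ i.val + j + 1 then
      m ^ (i.val + j + 1 - n) * (Nat.choose i.val (n - 1 - j) : R) else 0) *
    genFibU m (n - 1 - j)) n]
  rw [← Finset.sum_range_reflect]
  have hcongr : ∀ k ∈ Finset.range n,
      (-1 : R) ^ (n - (n - 1 - k)) *
        (if n ≤ i.val + (n - 1 - k) + 1 then
          m ^ (i.val + (n - 1 - k) + 1 - n) * (Nat.choose i.val (n - 1 - (n - 1 - k)) : R) else 0) *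
        genFibU m (n - 1 - (n - 1 - k))
      = (Nat.choose i.val k : R) * (-1) ^ (k + 1) * m ^ (i.val - k) * genFibU m k := by
    intro k hk
    rw [Finset.mem_range] at hk
    have e1 : n - (n - 1 - k) = k + 1 := by omega
    have e2 : n - 1 - (n - 1 - k) = k := by omega
    rw [e1, e2]
    by_cases hki : k ≤ i.val
    · have hc : n ≤ i.val + (n - 1 - k) + 1 := by omega
      have e3 : i.val + (n - 1 - k) + 1 - n = i.val - k := by omega
      rw [if_pos hc, e3]
      ring
    · have hc : ¬ n ≤ i.val + (n - 1 - k) + 1 := by omega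
      rw [if_neg hc, Nat.choose_eq_zero_of_lt (by omega)]
      simp
  rw [Finset.sum_congr rfl hcongr]
  have hsub : ∑ k ∈ Finset.range n,
      (Nat.choose i.val k : R) * (-1) ^ (k + 1) * m ^ (i.val - k) * genFibU m k
      = Fsum m (genFibU m) i.val := by
    rw [Fsum]
    symm
    apply Finset.sum_subset
    · intro x hx
      rw [Finset.mem_range] at *
      omega
    · intro x _ hx
      rw [Finset.mem_range, not_lt] at hx
      rw [Nat.choose_eq_zero_of_lt (by omega)]
      simp
  rw [hsub, (key m i.val).1]
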